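/- Fix an integer k ≠ 0. Suppose F₀ : ℝ/2πℤ → ℂ with S := 2π ∫|F₀|² > 0, and suppose that for all t ≥ 0 the function F(·,t) = e^{ikΦ(·,t)} F₀ satisfies ‖∂_y F(·,t)‖_{L¹} ≤ A + Bt for constants A, B ≥ 0. Then for all t ≥ 0, ∑_{m ∈ ℤ} |F̂(m,t)|² / (k² + m²) ≥ c²/(1+t⁴), where c² = S / (2(k² + 2D²)) and D = 1 + 8(A² + B²)/S, and F̂(m,t) = ∫_{-π}^{π} F(y,t) e^{imy} dy denotes the Fourier coefficients (with Parseval normalization ∑_m |F̂(m,t)|² = 2π∫|F(·,t)|² = S). -/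

import Mathlib

/-!
Integration by parts bounds the Fourier coefficients by
`|F̂(m)| ≤ ‖∂_y F‖_{L¹} / |m| ≤ (A + Bt) / |m|`, so the Parseval mass carried by the modes
`|m| > M` is at most `2 (A + Bt)² / M`. For `M ≈ 1 + 4 (A + Bt)² / S ≤ D (1 + t²)` at least half
of the mass `S` sits on `|m| ≤ M`, where the weight `1 / (k² + m²)` is at least
`1 / (k² + M²) ≥ 1 / ((k² + 2D²)(1 + t⁴))`.
-/

open MeasureTheory intervalIntegral Set Complex
open scoped Real

theorem intervalIntegral.integral_indicator_Ici {E : Type*} [NormedAddCommGroup E]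
    [NormedSpace ℝ E] {f : ℝ → E} {a b c : ℝ} (h : c ∈ Icc a b) :
    ∫ x in a..b, (Ici c).indicator f x = ∫ x in c..b, f x := by
  rw [integral_of_le (h.1.trans h.2), integral_of_le h.2, setIntegral_indicator measurableSet_Ici]
  rcases h.1.eq_or_lt with rfl | hac
  · rw [inter_eq_left.2 fun x hx => mem_Ici.2 hx.1.le]
  · have : Ioc a b ∩ Ici c = Icc c b := by
      ext x
      simp only [mem_inter_iff, mem_Ici, mem_Ioc, mem_Icc]
      exact ⟨fun hx => ⟨hx.2, hx.1.2⟩, fun hx => ⟨⟨hac.trans_le hx.1, hx.2⟩, hx.1⟩⟩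
    rw [this, integral_Icc_eq_integral_Ioc]

/-- Fubini on the triangle `a ≤ s ≤ y ≤ b`. -/
theorem intervalIntegral.integral_primitive_mul {𝕜 : Type*} [RCLike 𝕜] {a b : ℝ} (hab : a ≤ b)
    {g φ : ℝ → 𝕜} (hg : IntervalIntegrable g volume a b) (hφ : IntervalIntegrable φ volume a b) :
    ∫ y in a..b, (∫ s in a..y, g s) * φ y = ∫ s in a..b, g s * ∫ y in s..b, φ y := by
  set F : ℝ → ℝ → 𝕜 := fun y s =>
    {p : ℝ × ℝ | p.2 ≤ p.1}.indicator (fun p => φ p.1 * g p.2) (y, s)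
  have hF : IntegrableOn (Function.uncurry F) (uIoc a b ×ˢ uIoc a b) := by
    rw [IntegrableOn, Measure.volume_eq_prod, ← Measure.prod_restrict]
    exact (hφ.def'.mul_prod hg.def').indicator (measurableSet_le measurable_snd measurable_fst)
  calc ∫ y in a..b, (∫ s in a..y, g s) * φ y = ∫ y in a..b, ∫ s in a..b, F y s := by
        refine integral_congr fun y hy => ?_
        rw [uIcc_of_le hab] at hy
        rw [← intervalIntegral.integral_indicator hy, ← intervalIntegral.integral_mul_const]
        congr 1 with s
        by_cases hsy : s ≤ y <;> simp [F, indicator, hsy, mul_comm]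
    _ = ∫ s in a..b, ∫ y in a..b, F y s := intervalIntegral_intervalIntegral_swap hF
    _ = ∫ s in a..b, g s * ∫ y in s..b, φ y := by
        refine integral_congr fun s hs => ?_
        rw [uIcc_of_le hab] at hs
        rw [← intervalIntegral.integral_indicator_Ici hs, ← intervalIntegral.integral_const_mul]
        congr 1 with y
        by_cases hsy : s ≤ y <;> simp [F, indicator, hsy, mul_comm]

theorem integral_mul_exp_eq_of_primitive {a b : ℝ} (hab : a ≤ b) {f g : ℝ → ℂ} {c : ℂ}
    (hc : c ≠ 0) (hexp : exp (c * b) = exp (c * a)) (hg : IntervalIntegrable g volume a b)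
    (hfg : ∀ y, f y - f a = ∫ s in a..y, g s) (hfab : f b = f a) :
    ∫ y in a..b, f y * exp (c * y) = -c⁻¹ * ∫ y in a..b, g y * exp (c * y) := by
  have hE : Continuous fun y : ℝ => exp (c * y) := by fun_prop
  have hG : ContinuousOn (fun y => ∫ s in a..y, g s) (uIcc a b) :=
    continuousOn_primitive_interval <| by
      rw [uIcc_of_le hab]; exact (intervalIntegrable_iff_integrableOn_Icc_of_le hab).1 hg
  have hE0 : ∫ y in a..b, exp (c * y) = 0 := by
    rw [integral_exp_mul_complex hc, hexp, sub_self, zero_div]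
  have hg0 : ∫ y in a..b, g y = 0 := by rw [← hfg, hfab, sub_self]
  calc ∫ y in a..b, f y * exp (c * y)
      = ∫ y in a..b, (f a * exp (c * y) + (∫ s in a..y, g s) * exp (c * y)) :=
        integral_congr fun y _ => by rw [← hfg]; ring
    _ = ∫ s in a..b, g s * ∫ y in s..b, exp (c * y) := by
        rw [integral_add ((hE.intervalIntegrable _ _).const_mul _)
          (hG.intervalIntegrable.mul_continuousOn hE.continuousOn),
          intervalIntegral.integral_const_mul, hE0, mul_zero, zero_add,
          integral_primitive_mul hab hg (hE.intervalIntegrable _ _)]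
    _ = ∫ s in a..b, (c⁻¹ * exp (c * a) * g s - c⁻¹ * (g s * exp (c * s))) :=
        integral_congr fun s _ => by rw [integral_exp_mul_complex hc, hexp]; field_simp
    _ = -c⁻¹ * ∫ y in a..b, g y * exp (c * y) := by
        rw [integral_sub (hg.const_mul _) ((hg.mul_continuousOn hE.continuousOn).const_mul _),
          intervalIntegral.integral_const_mul, intervalIntegral.integral_const_mul, hg0]
        ring

/-- The paper's Fourier coefficient `F̂(m) = ∫_{-π}^{π} F(y) e^{imy} dy`: unnormalised and with the
sign `+i`, unlike Mathlib's `fourierCoeff`. -/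
noncomputable def fourierCoeffPi (f : ℝ → ℂ) (m : ℤ) : ℂ :=
  ∫ y in (-π)..π, f y * exp (I * m * y)

theorem norm_fourierCoeffPi_le {f g : ℝ → ℂ} {m : ℤ} (hm : m ≠ 0)
    (hg : IntervalIntegrable g volume (-π) π) (hfg : ∀ y, f y - f (-π) = ∫ s in (-π)..y, g s)
    (hper : f π = f (-π)) :
    ‖fourierCoeffPi f m‖ ≤ (∫ y in (-π)..π, ‖g y‖) / |(m : ℝ)| := by
  have hπ : -π ≤ π := by linarith [Real.pi_pos]
  have hc : I * m ≠ 0 := mul_ne_zero I_ne_zero (Int.cast_ne_zero.2 hm)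
  have hexp : exp (I * m * π) = exp (I * m * ↑(-π)) := by
    rw [show I * m * (π : ℂ) = I * m * ↑(-π) + m * (2 * π * I) by push_cast; ring, exp_add,
      exp_int_mul_two_pi_mul_I, mul_one]
  have hunit : ∀ y : ℝ, ‖exp (I * m * y)‖ = 1 := fun y => by
    rw [show I * m * y = ((m * y : ℝ) : ℂ) * I by push_cast; ring, norm_exp_ofReal_mul_I]
  rw [fourierCoeffPi, integral_mul_exp_eq_of_primitive hπ hc hexp hg hfg hper, norm_mul, norm_neg,
    norm_inv, norm_mul, norm_I, one_mul, norm_intCast, inv_mul_eq_div]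
  gcongr
  calc ‖∫ y in (-π)..π, g y * exp (I * m * y)‖ ≤ ∫ y in (-π)..π, ‖g y * exp (I * m * y)‖ :=
        norm_integral_le_integral_norm hπ
    _ = ∫ y in (-π)..π, ‖g y‖ := by simp only [norm_mul, hunit, mul_one]

theorem Finset.sum_inv_sq_le_of_forall_lt {M : ℕ} (hM : M ≠ 0) {v : Finset ℕ}
    (hv : ∀ i ∈ v, M < i) : ∑ i ∈ v, ((i : ℝ) ^ 2)⁻¹ ≤ (M : ℝ)⁻¹ := by
  set N := max M (v.sup id)
  have hsub : v ⊆ Finset.Ioc M N := fun i hi =>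
    Finset.mem_Ioc.2 ⟨hv i hi, le_max_of_le_right (Finset.le_sup (f := id) hi)⟩
  calc ∑ i ∈ v, ((i : ℝ) ^ 2)⁻¹ ≤ ∑ i ∈ Finset.Ioc M N, ((i : ℝ) ^ 2)⁻¹ :=
        Finset.sum_le_sum_of_subset_of_nonneg hsub fun _ _ _ => by positivity
    _ ≤ (M : ℝ)⁻¹ - (N : ℝ)⁻¹ := sum_Ioc_inv_sq_le_sub hM (le_max_left _ _)
    _ ≤ (M : ℝ)⁻¹ := sub_le_self _ (by positivity)

theorem Finset.sum_int_inv_sq_le_of_forall_lt_natAbs {M : ℕ} (hM : M ≠ 0) {u : Finset ℤ}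
    (hu : ∀ n ∈ u, M < n.natAbs) : ∑ n ∈ u, ((n : ℝ) ^ 2)⁻¹ ≤ 2 / M := by
  classical
  have hfiber : ∀ i : ℕ, (u.filter (·.natAbs = i)).card ≤ 2 := fun i =>
    calc _ ≤ ({(i : ℤ), -(i : ℤ)} : Finset ℤ).card := Finset.card_le_card fun n hn => by
          obtain rfl := (Finset.mem_filter.1 hn).2
          exact Finset.mem_insert.2 ((Int.natAbs_eq n).imp id Finset.mem_singleton.2)
      _ ≤ 2 := Finset.card_le_two
  calc ∑ n ∈ u, ((n : ℝ) ^ 2)⁻¹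
      = ∑ i ∈ u.image Int.natAbs, ∑ n ∈ u with n.natAbs = i, ((i : ℝ) ^ 2)⁻¹ := by
        rw [← Finset.sum_fiberwise_of_maps_to (g := Int.natAbs)
          fun n hn => Finset.mem_image_of_mem _ hn]
        refine Finset.sum_congr rfl fun i _ => Finset.sum_congr rfl fun n hn => ?_
        rw [← (Finset.mem_filter.1 hn).2, Nat.cast_natAbs, Int.cast_abs, sq_abs]
    _ ≤ ∑ i ∈ u.image Int.natAbs, 2 * ((i : ℝ) ^ 2)⁻¹ := by
        gcongr with i
        rw [Finset.sum_const, nsmul_eq_mul]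
        gcongr
        exact_mod_cast hfiber i
    _ ≤ 2 * (M : ℝ)⁻¹ := by
        rw [← Finset.mul_sum]
        gcongr
        refine Finset.sum_inv_sq_le_of_forall_lt hM fun i hi => ?_
        obtain ⟨n, hn, rfl⟩ := Finset.mem_image.1 hi
        exact hu n hn
    _ = 2 / M := (div_eq_mul_inv _ _).symm

theorem tsum_compl_Icc_le_of_le_div_sq {c : ℤ → ℝ} (hc : Summable c) {K : ℝ} (hK : 0 ≤ K)
    (hdecay : ∀ m ≠ 0, c m ≤ K / m ^ 2) {M : ℕ} (hM : M ≠ 0) :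
    ∑' m : ((Finset.Icc (-(M : ℤ)) M : Set ℤ)ᶜ : Set ℤ), c m ≤ 2 * K / M := by
  refine (hc.subtype _).tsum_le_of_sum_le fun t => ?_
  have hout : ∀ n ∈ t.map (Function.Embedding.subtype _), M < n.natAbs := by
    intro n hn
    obtain ⟨⟨n, hn'⟩, -, rfl⟩ := Finset.mem_map.1 hn
    change M < n.natAbs
    simp only [Set.mem_compl_iff, Finset.coe_Icc, Set.mem_Icc, not_and_or, not_le] at hn'
    omega
  calc ∑ m ∈ t, c m = ∑ n ∈ t.map (Function.Embedding.subtype _), c n := by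
        rw [Finset.sum_map]; rfl
    _ ≤ ∑ n ∈ t.map (Function.Embedding.subtype _), K * ((n : ℝ) ^ 2)⁻¹ :=
        Finset.sum_le_sum fun n hn => (hdecay n (by have := hout n hn; omega)).trans_eq
          (div_eq_mul_inv _ _)
    _ ≤ K * (2 / M) := by
        rw [← Finset.mul_sum]
        exact mul_le_mul_of_nonneg_left (Finset.sum_int_inv_sq_le_of_forall_lt_natAbs hM hout) hK
    _ = 2 * K / M := by ring

theorem div_le_tsum_div_add_sq_of_le_div_sq {c : ℤ → ℝ} {S K : ℝ} {k : ℝ} (hk : k ≠ 0)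
    (hc : ∀ m, 0 ≤ c m) (hS : HasSum c S) (hSpos : 0 < S) (hK : 0 ≤ K)
    (hdecay : ∀ m ≠ 0, c m ≤ K / m ^ 2) :
    S / 2 / (k ^ 2 + (1 + 4 * K / S) ^ 2) ≤ ∑' m, c m / (k ^ 2 + m ^ 2) := by
  set M : ℕ := ⌊4 * K / S⌋₊ + 1
  have hM_gt : 4 * K / S < M := by simpa [M] using Nat.lt_floor_add_one (4 * K / S)
  have hM_le : (M : ℝ) ≤ 1 + 4 * K / S := by
    simp only [M, Nat.cast_add, Nat.cast_one]
    linarith [Nat.floor_le (show 0 ≤ 4 * K / S by positivity)]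
  have hM0 : (0 : ℝ) < M := by positivity
  have hhead : S / 2 ≤ ∑ m ∈ Finset.Icc (-(M : ℤ)) M, c m := by
    have htail := tsum_compl_Icc_le_of_le_div_sq hS.summable hK hdecay (M := M)
      (Nat.succ_ne_zero _)
    have hsplit := hS.summable.sum_add_tsum_compl (s := Finset.Icc (-(M : ℤ)) M)
    rw [hS.tsum_eq] at hsplit
    have : 2 * K / M ≤ S / 2 := by
      rw [div_lt_iff₀ hSpos] at hM_gt
      rw [div_le_div_iff₀ hM0 two_pos]
      nlinarith
    linarith
  have hk2 : 0 < k ^ 2 := by positivity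
  have hw : ∀ m : ℤ, 0 ≤ c m / (k ^ 2 + m ^ 2) := fun m => div_nonneg (hc m) (by positivity)
  have hsum : Summable fun m : ℤ => c m / (k ^ 2 + m ^ 2) :=
    (hS.summable.div_const (k ^ 2)).of_nonneg_of_le hw fun m =>
      div_le_div_of_nonneg_left (hc m) hk2 (le_add_of_nonneg_right (sq_nonneg _))
  calc S / 2 / (k ^ 2 + (1 + 4 * K / S) ^ 2) ≤ S / 2 / (k ^ 2 + (M : ℝ) ^ 2) := by gcongr
    _ ≤ (∑ m ∈ Finset.Icc (-(M : ℤ)) M, c m) / (k ^ 2 + (M : ℝ) ^ 2) := by gcongr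
    _ = ∑ m ∈ Finset.Icc (-(M : ℤ)) M, c m / (k ^ 2 + (M : ℝ) ^ 2) := Finset.sum_div _ _ _
    _ ≤ ∑ m ∈ Finset.Icc (-(M : ℤ)) M, c m / (k ^ 2 + (m : ℝ) ^ 2) := by
        refine Finset.sum_le_sum fun m hm => ?_
        obtain ⟨hlo, hhi⟩ := Finset.mem_Icc.1 hm
        have : (m : ℝ) ^ 2 ≤ (M : ℝ) ^ 2 :=
          sq_le_sq' (by exact_mod_cast hlo) (by exact_mod_cast hhi)
        gcongr
        exact hc m
    _ ≤ ∑' m, c m / (k ^ 2 + m ^ 2) := hsum.sum_le_tsum _ fun m _ => hw m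

open MeasureTheory intervalIntegral in
theorem inviscid_mode_Hm1_lower_bound_general
    (k : ℤ) (hk : k ≠ 0)
    (F Fy : ℝ → ℝ → ℂ) (S A B : ℝ)
    (hSpos : 0 < S)
    (hper : ∀ t, Function.Periodic (F t) (2 * Real.pi))
    (hFyint : ∀ t, 0 ≤ t → ∀ a b : ℝ, IntervalIntegrable (Fy t) volume a b)
    (hftc : ∀ t, 0 ≤ t → ∀ a b : ℝ, F t b - F t a = ∫ y in a..b, Fy t y)
    (hL1 : ∀ t, 0 ≤ t →
      (∫ y in (-Real.pi)..Real.pi, ‖Fy t y‖) ≤ A + B * t)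
    (hParseval : ∀ t, 0 ≤ t →
      HasSum (fun m : ℤ =>
        ‖∫ y in (-Real.pi)..Real.pi, F t y * Complex.exp (Complex.I * m * y)‖^2) S) :
    ∀ t, 0 ≤ t →
      S / (2 * ((k : ℝ)^2 + 2 * (1 + 8 * (A^2 + B^2) / S)^2)) / (1 + t^4)
        ≤ ∑' m : ℤ,
            ‖∫ y in (-Real.pi)..Real.pi, F t y * Complex.exp (Complex.I * m * y)‖^2
              / ((k : ℝ)^2 + (m : ℝ)^2) := by
  intro t ht
  set L := A + B * t
  set D := 1 + 8 * (A ^ 2 + B ^ 2) / S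
  have hdecay : ∀ m : ℤ, m ≠ 0 → ‖fourierCoeffPi (F t) m‖ ^ 2 ≤ L ^ 2 / m ^ 2 := fun m hm => by
    have hendpoints : F t π = F t (-π) := by
      have h := hper t (-π)
      rwa [show -π + 2 * π = π by ring] at h
    have h := (norm_fourierCoeffPi_le hm (hFyint t ht _ _) (hftc t ht _) hendpoints).trans
      (div_le_div_of_nonneg_right (hL1 t ht) (abs_nonneg _))
    calc _ ≤ (L / |(m : ℝ)|) ^ 2 := pow_le_pow_left₀ (norm_nonneg _) h 2
      _ = L ^ 2 / m ^ 2 := by rw [div_pow, sq_abs]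
  refine le_trans ?_ (div_le_tsum_div_add_sq_of_le_div_sq (Int.cast_ne_zero.2 hk)
    (fun m => sq_nonneg _) (hParseval t ht) hSpos (sq_nonneg L) hdecay)
  have hcutoff : 1 + 4 * L ^ 2 / S ≤ D * (1 + t ^ 2) := by
    rw [← sub_nonneg]
    have : D * (1 + t ^ 2) - (1 + 4 * L ^ 2 / S)
        = t ^ 2 + (4 * (A - B * t) ^ 2 + 8 * A ^ 2 * t ^ 2 + 8 * B ^ 2) / S := by
      simp only [D, L]; field_simp; ring
    rw [this]; positivity
  have hsq : (1 + 4 * L ^ 2 / S) ^ 2 ≤ 2 * D ^ 2 * (1 + t ^ 4) :=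
    (pow_le_pow_left₀ (by positivity) hcutoff 2).trans (by nlinarith [sq_nonneg (D * (t ^ 2 - 1))])
  rw [div_div, div_div]
  refine div_le_div_of_nonneg_left hSpos.le (by positivity) ?_
  nlinarith [sq_nonneg (k : ℝ), pow_nonneg (sq_nonneg t) 2]

open MeasureTheory intervalIntegral in
/-- Core inviscid lower bound: a phase-modulated mode `F(·,t) = e^{ikΦ(·,t)} F₀`
of conserved Parseval mass `S` whose `y`-derivative has `L¹` norm growing at
most linearly retains a weighted `H^{-1}` mass of order `1/(1+t⁴)`. -/
theorem inviscid_mode_Hm1_lower_bound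
    (k : ℤ) (hk : k ≠ 0) (F₀ : ℝ → ℂ) (Φ : ℝ → ℝ → ℝ)
    (F Fy : ℝ → ℝ → ℂ) (S A B : ℝ)
    (hF : ∀ t y, F t y = Complex.exp (Complex.I * k * Φ t y) * F₀ y)
    (hS : S = 2 * Real.pi * ∫ y in (-Real.pi)..Real.pi, ‖F₀ y‖^2)
    (hSpos : 0 < S) (hA : 0 ≤ A) (hB : 0 ≤ B)
    (hper : ∀ t, Function.Periodic (F t) (2 * Real.pi))
    (hFyint : ∀ t, 0 ≤ t → ∀ a b : ℝ, IntervalIntegrable (Fy t) volume a b)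
    (hftc : ∀ t, 0 ≤ t → ∀ a b : ℝ, F t b - F t a = ∫ y in a..b, Fy t y)
    (hL1 : ∀ t, 0 ≤ t →
      (∫ y in (-Real.pi)..Real.pi, ‖Fy t y‖) ≤ A + B * t)
    (hParseval : ∀ t, 0 ≤ t →
      HasSum (fun m : ℤ =>
        ‖∫ y in (-Real.pi)..Real.pi, F t y * Complex.exp (Complex.I * m * y)‖^2) S) :
    ∀ t, 0 ≤ t →
      S / (2 * ((k : ℝ)^2 + 2 * (1 + 8 * (A^2 + B^2) / S)^2)) / (1 + t^4)
        ≤ ∑' m : ℤ,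
            ‖∫ y in (-Real.pi)..Real.pi, F t y * Complex.exp (Complex.I * m * y)‖^2
              / ((k : ℝ)^2 + (m : ℝ)^2) :=
  inviscid_mode_Hm1_lower_bound_general k hk F Fy S A B hSpos hper hFyint hftc hL1 hParseval
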